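/- Let $v_1,\dots,v_n\in\mathbb{Z}^2$ (indices mod $n$, $n\geq 4$) satisfy $v_{j-1}+v_{j+1}=d_jv_j$ with each pair $(v_j,v_{j+1})$ a $\mathbb{Z}$-basis of $\mathbb{Z}^2$. Suppose classes $A_1,\dots,A_n$ and $\lambda_1,\dots,\lambda_{n-2}$ in a free $\mathbb{Z}$-module of rank $n-2$ satisfy $A_n=\lambda_1$, $A_1=\lambda_2-2\lambda_1$, $A_{n-1}=\lambda_{n-2}$, $A_{n-2}=\lambda_{n-3}+\gamma_{n-1,n-3}\lambda_{n-2}$, $A_j=\lambda_{j-1}+\gamma_{j+1,j-1}\lambda_j+\lambda_{j+1}$ for $3\leq j\leq n-3$, and $A_2=\lambda_1-d_2\lambda_2+\lambda_3$ (where $\gamma_{i,j}=\alpha_j\beta_i-\alpha_i\beta_j$ for $v_i=(\alpha_i,\beta_i)$). Then every $\lambda_i$ is an integral linear combination of $\{A_j : j\neq 2,3\}$; in particular $\{A_j : j\neq 2,3\}$ spans the module over $\mathbb{Z}$. -/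
import Mathlib


/-- `γ_{i,j} = α_j β_i - α_i β_j` for `v_i = (α_i, β_i)`. -/
def gammaDet {n : ℕ} (v : ZMod n → ℤ × ℤ) (i j : ZMod n) : ℤ :=
  (v j).1 * (v i).2 - (v i).1 * (v j).2

/-- Lemma 4.7 of the paper, abstracted. Under the listed change-of-basis
relations between the divisor classes `A₁, …, Aₙ` and the basis classes `λ₁, …, λ_{n-2}`,
every `λᵢ` is an integral linear combination of `{A_j : j ≠ 2, 3}`; in particular, if the
`λᵢ` span the module, then `{A_j : j ≠ 2, 3}` spans it over `ℤ`. -/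
theorem lambdas_in_integral_span
    {M : Type*} [AddCommGroup M] [Module ℤ M]
    {n : ℕ} (hn : 4 ≤ n)
    (v : ZMod n → ℤ × ℤ) (d : ZMod n → ℤ)
    (hbasis : ∀ j : ZMod n,
      IsUnit ((v j).1 * (v (j + 1)).2 - (v j).2 * (v (j + 1)).1))
    (hrec : ∀ j : ZMod n, v (j - 1) + v (j + 1) = d j • v j)
    (A : ZMod n → M) (lam : ℕ → M)
    (hAn : A (n : ZMod n) = lam 1)
    (hA1 : A 1 = lam 2 - 2 • lam 1)
    (hAn1 : A ((n : ZMod n) - 1) = lam (n - 2))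
    (hAn2 : A ((n : ZMod n) - 2)
      = lam (n - 3) + gammaDet v ((n : ZMod n) - 1) ((n : ZMod n) - 3) • lam (n - 2))
    (hmid : ∀ j : ℕ, 3 ≤ j → j ≤ n - 3 →
      A (j : ZMod n)
        = lam (j - 1) + gammaDet v ((j : ZMod n) + 1) ((j : ZMod n) - 1) • lam j + lam (j + 1))
    (hA2 : A 2 = lam 1 - d 2 • lam 2 + lam 3) :
    (∀ i : ℕ, 1 ≤ i → i ≤ n - 2 →
      lam i ∈ Submodule.span ℤ (A '' {j : ZMod n | j ≠ 2 ∧ j ≠ 3})) ∧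
    (Submodule.span ℤ (lam '' Set.Icc 1 (n - 2)) = ⊤ →
      Submodule.span ℤ (A '' {j : ZMod n | j ≠ 2 ∧ j ≠ 3}) = ⊤) := by
  haveI : NeZero n := ⟨by omega⟩
  set S := Submodule.span ℤ (A '' {j : ZMod n | j ≠ 2 ∧ j ≠ 3}) with hS
  have hmem : ∀ j : ZMod n, j ≠ 2 → j ≠ 3 → A j ∈ S := fun j h2 h3 =>
    Submodule.subset_span ⟨j, ⟨h2, h3⟩, rfl⟩
  have hzsmul : ∀ (c : ℤ) (x : M), x ∈ S → c • x ∈ S := fun c x hx =>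
    (Submodule.toAddSubgroup S).zsmul_mem hx c
  have cast_inj : ∀ a b : ℕ, a < n → b < n → ((a : ZMod n) = (b : ZMod n)) → a = b := by
    intro a b ha hb h
    have := congrArg ZMod.val h
    rwa [ZMod.val_natCast_of_lt ha, ZMod.val_natCast_of_lt hb] at this
  have hne2 : ∀ a : ℕ, a < n → a ≠ 2 → ((a : ZMod n) ≠ 2) := by
    intro a ha h2 h
    exact h2 (cast_inj a 2 ha (by omega) (by exact_mod_cast h))
  have hne3 : ∀ a : ℕ, a < n → a ≠ 3 → ((a : ZMod n) ≠ 3) := by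
    intro a ha h3 h
    exact h3 (cast_inj a 3 ha (by omega) (by exact_mod_cast h))
  have hmemNat : ∀ a : ℕ, a < n → a ≠ 2 → a ≠ 3 → A ((a : ℕ) : ZMod n) ∈ S := fun a ha h2 h3 =>
    hmem _ (hne2 a ha h2) (hne3 a ha h3)
  -- basic elements
  have h1 : lam 1 ∈ S := by
    rw [← hAn, ZMod.natCast_self]
    have : ((0 : ℕ) : ZMod n) = (0 : ZMod n) := by norm_cast
    rw [← this]
    exact hmemNat 0 (by omega) (by omega) (by omega)
  have h2 : lam 2 ∈ S := by
    have heq : lam 2 = A 1 + lam 1 + lam 1 := by rw [hA1]; abel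
    rw [heq]
    refine add_mem (add_mem ?_ h1) h1
    have : ((1 : ℕ) : ZMod n) = (1 : ZMod n) := by norm_cast
    rw [← this]
    exact hmemNat 1 (by omega) (by omega) (by omega)
  -- the last basis element, for n ≥ 5
  have hlast : 5 ≤ n → lam (n - 2) ∈ S := by
    intro h5
    rw [← hAn1, ZMod.natCast_self, zero_sub]
    have : ((n - 1 : ℕ) : ZMod n) = -1 := by
      push_cast [Nat.cast_sub (by omega : 1 ≤ n)]
      simp
    rw [← this]
    exact hmemNat (n - 1) (by omega) (by omega) (by omega)
  have key : ∀ k : ℕ, ∀ i : ℕ, 1 ≤ i → i ≤ n - 2 → n - 2 - i ≤ k → lam i ∈ S := by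
    intro k
    induction k with
    | zero =>
      intro i hi1 hi2 hk
      have : i = n - 2 := by omega
      subst this
      rcases Nat.lt_or_ge n 5 with h | h
      · have : n - 2 = 2 := by omega
        rw [this]; exact h2
      · exact hlast h
    | succ k ih =>
      intro i hi1 hi2 hk
      rcases le_or_gt (n - 2 - i) k with h | h
      · exact ih i hi1 hi2 h
      have hilt : i < n - 2 := by omega
      rcases Nat.lt_or_ge i 3 with h3 | h3
      · interval_cases i
        · exact h1
        · exact h2
      rcases Nat.eq_or_lt_of_le (show i ≤ n - 3 by omega) with heq | hlt
      · -- i = n - 3, use hAn2; here n ≥ 6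
        have h6 : 6 ≤ n := by omega
        have heq2 : lam (n - 3)
            = A ((n : ZMod n) - 2)
              - gammaDet v ((n : ZMod n) - 1) ((n : ZMod n) - 3) • lam (n - 2) := by
          rw [hAn2]; abel
        rw [heq, heq2]
        refine sub_mem ?_ (hzsmul _ _ (ih (n - 2) (by omega) le_rfl (by omega)))
        have hc : ((n - 2 : ℕ) : ZMod n) = (n : ZMod n) - 2 := by
          push_cast [Nat.cast_sub (by omega : 2 ≤ n)]
          ring
        rw [← hc, ZMod.natCast_self, zero_sub] at *
        rw [← hc]
        exact hmemNat (n - 2) (by omega) (by omega) (by omega)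
      · -- 3 ≤ i ≤ n - 4, use hmid at j = i + 1
        have hm := hmid (i + 1) (by omega) (by omega)
        rw [Nat.add_sub_cancel] at hm
        have heq2 : lam i
            = A ((i + 1 : ℕ) : ZMod n)
              - gammaDet v (((i + 1 : ℕ) : ZMod n) + 1) (((i + 1 : ℕ) : ZMod n) - 1)
                  • lam (i + 1) - lam (i + 1 + 1) := by
          rw [hm]; abel
        rw [heq2]
        refine sub_mem (sub_mem ?_
          (hzsmul _ _ (ih (i + 1) (by omega) (by omega) (by omega))))
          (ih (i + 2) (by omega) (by omega) (by omega))
        exact hmemNat (i + 1) (by omega) (by omega) (by omega)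
  have main : ∀ i : ℕ, 1 ≤ i → i ≤ n - 2 → lam i ∈ S := fun i hi1 hi2 =>
    key (n - 2 - i) i hi1 hi2 le_rfl
  refine ⟨main, fun htop => ?_⟩
  rw [eq_top_iff, ← htop]
  rw [Submodule.span_le]
  rintro x ⟨i, ⟨hi1, hi2⟩, rfl⟩
  exact main i hi1 hi2
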